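/- arXiv:2512.21487 — 3 statements merged into one kernel-verified Lean document; each statement's English description precedes it below -/
import Mathlib

section
/- For any fixed pipeline degrees r₁ ≥ 1 and r₂ ≥ 1 (with the number of layers T ≥ 1 fixed), the throughput objective Θ(r₁, m_a, r₂, k·m_a/r₂) is strictly monotonically increasing as a function of m_a on (0, ∞); that is, for all 0 < m_a < m_a′ one has Θ(r₁, m_a, r₂, k·m_a/r₂) < Θ(r₁, m_a′, r₂, k·m_a′/r₂). -/
/-- `f(m)/m` weakly decreasing on positives, in cross-multiplied form. -/
def DecRatio (f : ℝ → ℝ) : Prop :=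
  ∀ m m' : ℝ, 0 < m → m ≤ m' → m * f m' ≤ m' * f m

/-- `f(m)/m` strictly decreasing on positives, in cross-multiplied form. -/
def SDecRatio (f : ℝ → ℝ) : Prop :=
  ∀ m m' : ℝ, 0 < m → m < m' → m * f m' < m' * f m

lemma decRatio_affine (α β : ℝ) (hα : 0 ≤ α) :
    DecRatio (fun m => α + β * m) := by
  intro m m' hm hle; dsimp only; nlinarith

lemma sdecRatio_affine (α β : ℝ) (hα : 0 < α) :
    SDecRatio (fun m => α + β * m) := by
  intro m m' hm hlt; dsimp only; nlinarith

lemma decRatio_add {f g : ℝ → ℝ} (hf : DecRatio f) (hg : DecRatio g) :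
    DecRatio (fun m => f m + g m) := by
  intro m m' hm hle
  have := hf m m' hm hle
  have := hg m m' hm hle
  dsimp only; nlinarith

lemma sdecRatio_add_left {f g : ℝ → ℝ} (hf : SDecRatio f) (hg : DecRatio g) :
    SDecRatio (fun m => f m + g m) := by
  intro m m' hm hlt
  have := hf m m' hm hlt
  have := hg m m' hm hlt.le
  dsimp only; nlinarith

lemma sdecRatio_add_right {f g : ℝ → ℝ} (hf : DecRatio f) (hg : SDecRatio g) :
    SDecRatio (fun m => f m + g m) := by
  intro m m' hm hlt
  have := hf m m' hm hlt.le
  have := hg m m' hm hlt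
  dsimp only; nlinarith

lemma decRatio_smul {f : ℝ → ℝ} (c : ℝ) (hc : 0 ≤ c) (hf : DecRatio f) :
    DecRatio (fun m => c * f m) := by
  intro m m' hm hle
  have := hf m m' hm hle
  dsimp only; nlinarith

lemma sdecRatio_smul {f : ℝ → ℝ} (c : ℝ) (hc : 0 < c) (hf : SDecRatio f) :
    SDecRatio (fun m => c * f m) := by
  intro m m' hm hlt
  have := hf m m' hm hlt
  dsimp only; nlinarith

lemma decRatio_max {f g : ℝ → ℝ} (hf : DecRatio f) (hg : DecRatio g) :
    DecRatio (fun m => max (f m) (g m)) := by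
  intro m m' hm hle
  have h1 := hf m m' hm hle
  have h2 := hg m m' hm hle
  have h3 : 0 < m' := lt_of_lt_of_le hm hle
  simp only
  rw [mul_max_of_nonneg _ _ hm.le, mul_max_of_nonneg _ _ h3.le]
  exact max_le (h1.trans (le_max_left _ _)) (h2.trans (le_max_right _ _))

lemma sdecRatio_max {f g : ℝ → ℝ} (hf : SDecRatio f) (hg : SDecRatio g) :
    SDecRatio (fun m => max (f m) (g m)) := by
  intro m m' hm hlt
  have h1 := hf m m' hm hlt
  have h2 := hg m m' hm hlt
  have h3 : 0 < m' := hm.trans hlt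
  simp only
  rw [mul_max_of_nonneg _ _ hm.le, mul_max_of_nonneg _ _ h3.le]
  exact max_lt (h1.trans_le (le_max_left _ _)) (h2.trans_le (le_max_right _ _))

lemma sdecRatio_to_dec {f : ℝ → ℝ} (hf : SDecRatio f) : DecRatio f := by
  intro m m' hm hle
  rcases eq_or_lt_of_le hle with rfl | h
  · exact le_rfl
  · exact (hf m m' hm h).le

/-- Paper Theorem 1.
Fix positive coefficients of the linear performance models, a constant `k > 0`,
an integer number of layers `T ≥ 1`, and pipeline degrees `r₁ ≥ 1`, `r₂ ≥ 1`.
Under the token-conservation constraint `m_e = k·m_a/r₂`, the throughput objective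
`Θ(r₁, m_a, r₂, k·m_a/r₂)` is strictly monotonically increasing in `m_a` on `(0, ∞)`. -/
theorem stmt_0
    (αa βa αs βs αe βe αc βc k : ℝ)
    (hαa : 0 < αa) (hβa : 0 < βa) (hαs : 0 < αs) (hβs : 0 < βs)
    (hαe : 0 < αe) (hβe : 0 < βe) (hαc : 0 < αc) (hβc : 0 < βc)
    (hk : 0 < k) (T : ℕ) (hT : 1 ≤ T)
    (ta ts te ta2e X Y : ℝ → ℝ) (F G : ℝ → ℝ → ℝ → ℝ)
    (Θ : ℝ → ℝ → ℝ → ℝ → ℝ)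
    (hta : ∀ m, ta m = αa + βa * m)
    (hts : ∀ m, ts m = αs + βs * m)
    (hte : ∀ m, te m = αe + βe * m)
    (hta2e : ∀ m, ta2e m = αc + βc * m)
    (hX : ∀ ma, X ma = ta ma + ts ma)
    (hY : ∀ me, Y me = max (te me) (ta2e me))
    (hF : ∀ r₂ ma me, F r₂ ma me = max (X ma) (r₂ * Y me))
    (hG : ∀ r₂ ma me, G r₂ ma me =
      ta ma + 2 * ta2e me + te me + (r₂ - 1) * Y me)
    (hΘ : ∀ r₁ ma r₂ me, Θ r₁ ma r₂ me =
      r₁ * ma /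
        (((T : ℝ) - 1) * max (G r₂ ma me) (r₁ * F r₂ ma me)
          + max (X ma) (G r₂ ma me)
          + (r₂ - 1) * Y me + (r₁ - 1) * F r₂ ma me))
    (r₁ r₂ : ℝ) (hr₁ : 1 ≤ r₁) (hr₂ : 1 ≤ r₂) :
    ∀ ma ma' : ℝ, 0 < ma → ma < ma' →
      Θ r₁ ma r₂ (k * ma / r₂) < Θ r₁ ma' r₂ (k * ma' / r₂) := by
  have hr₂0 : (0:ℝ) < r₂ := lt_of_lt_of_le one_pos hr₂
  have hr₁0 : (0:ℝ) < r₁ := lt_of_lt_of_le one_pos hr₁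
  set c : ℝ := k / r₂ with hc
  have hc0 : 0 < c := div_pos hk hr₂0
  -- explicit forms of all components as functions of m (with me = c*m)
  set Xf : ℝ → ℝ := fun m => (αa + αs) + (βa + βs) * m with hXf
  set Yf : ℝ → ℝ := fun m => max ((αe + (βe * c) * m)) ((αc + (βc * c) * m)) with hYf
  set Ff : ℝ → ℝ := fun m => max (Xf m) (r₂ * Yf m) with hFf
  set Gf : ℝ → ℝ := fun m =>
    ((αa + 2*αc + αe) + (βa + 2*βc*c + βe*c) * m) + (r₂ - 1) * Yf m with hGf
  set Df : ℝ → ℝ := fun m =>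
    ((T : ℝ) - 1) * max (Gf m) (r₁ * Ff m) + max (Xf m) (Gf m)
      + (r₂ - 1) * Yf m + (r₁ - 1) * Ff m with hDf
  -- SDecRatio facts
  have hXs : SDecRatio Xf := sdecRatio_affine _ _ (by linarith)
  have hYs : SDecRatio Yf :=
    sdecRatio_max (sdecRatio_affine _ _ hαe) (sdecRatio_affine _ _ hαc)
  have hFs : SDecRatio Ff := sdecRatio_max hXs (sdecRatio_smul r₂ hr₂0 hYs)
  have hGs : SDecRatio Gf :=
    sdecRatio_add_left (sdecRatio_affine _ _ (by linarith))
      (decRatio_smul _ (by linarith) (sdecRatio_to_dec hYs))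
  have hDs : SDecRatio Df := by
    apply sdecRatio_add_left
    apply sdecRatio_add_left
    apply sdecRatio_add_right
    · exact decRatio_smul _ (by simp [sub_nonneg]; exact_mod_cast hT)
        (sdecRatio_to_dec (sdecRatio_max hGs (sdecRatio_smul r₁ hr₁0 hFs)))
    · exact sdecRatio_max hXs hGs
    · exact decRatio_smul _ (by linarith) (sdecRatio_to_dec hYs)
    · exact decRatio_smul _ (by linarith) (sdecRatio_to_dec hFs)
  -- positivity of Df on positives
  have hXpos : ∀ m : ℝ, 0 < m → 0 < Xf m := by
    intro m hm; simp only [hXf]; nlinarith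
  have hYpos : ∀ m : ℝ, 0 < m → 0 < Yf m := by
    intro m hm
    simp only [hYf]
    exact lt_max_of_lt_left (by nlinarith [mul_pos (mul_pos hβe hc0) hm])
  have hFpos : ∀ m : ℝ, 0 < m → 0 < Ff m := by
    intro m hm; exact lt_max_of_lt_left (hXpos m hm)
  have hGpos : ∀ m : ℝ, 0 < m → 0 < Gf m := by
    intro m hm
    have h0 := hYpos m hm
    simp only [hGf]
    nlinarith [mul_nonneg (by linarith : (0:ℝ) ≤ r₂ - 1) h0.le,
      mul_pos (mul_pos hβc hc0) hm, mul_pos (mul_pos hβe hc0) hm, mul_pos hβa hm]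
  have hDpos : ∀ m : ℝ, 0 < m → 0 < Df m := by
    intro m hm
    have h1 : 0 < max (Xf m) (Gf m) := lt_max_of_lt_left (hXpos m hm)
    have h2 : 0 ≤ ((T : ℝ) - 1) * max (Gf m) (r₁ * Ff m) := by
      apply mul_nonneg
      · simp [sub_nonneg]; exact_mod_cast hT
      · exact le_max_of_le_left (hGpos m hm).le
    have h3 : 0 ≤ (r₂ - 1) * Yf m := mul_nonneg (by linarith) (hYpos m hm).le
    have h4 : 0 ≤ (r₁ - 1) * Ff m := mul_nonneg (by linarith) (hFpos m hm).le
    simp only [hDf]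
    linarith
  -- rewrite Θ
  have hΘeq : ∀ m : ℝ, Θ r₁ m r₂ (k * m / r₂) = r₁ * m / Df m := by
    intro m
    have hme : k * m / r₂ = c * m := by rw [hc]; ring
    have hXeq : X m = Xf m := by simp [hX, hta, hts, hXf]; ring
    have hYeq : Y (k * m / r₂) = Yf m := by
      simp [hY, hte, hta2e, hme, hYf]; ring_nf
    have hFeq : F r₂ m (k * m / r₂) = Ff m := by
      rw [hF, hXeq, hYeq, hFf]
    have hGeq : G r₂ m (k * m / r₂) = Gf m := by
      rw [hG, hYeq, hta, hta2e, hte, hme, hGf]; dsimp only; ring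
    rw [hΘ, hXeq, hYeq, hFeq, hGeq, hDf]
  intro ma ma' hma hlt
  have hma' : 0 < ma' := hma.trans hlt
  rw [hΘeq, hΘeq]
  rw [div_lt_div_iff₀ (hDpos ma hma) (hDpos ma' hma')]
  have key := hDs ma ma' hma hlt
  nlinarith [hDpos ma hma, hDpos ma' hma']
end

section
/- For any fixed micro-batch size m_a > 0 and fine-grained pipeline degree r₂ ≥ 1 (with m_e = k·m_a/r₂ and the number of layers T ≥ 1 fixed), the throughput objective r₁ ↦ Θ(r₁, m_a, r₂, m_e) is monotonically non-decreasing in r₁ on (0, ∞): for all 0 < r₁ ≤ r₁′, Θ(r₁, m_a, r₂, m_e) ≤ Θ(r₁′, m_a, r₂, m_e). -/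
/-- Paper Theorem 3.
Fix `m_a > 0` and `r₂ ≥ 1` (with `m_e = k·m_a/r₂`, `T ≥ 1`).
The throughput objective `r₁ ↦ Θ(r₁, m_a, r₂, m_e)` is monotonically
non-decreasing in `r₁` on `(0, ∞)`. -/
theorem stmt_2
    (αa βa αs βs αe βe αc βc k : ℝ)
    (hαa : 0 < αa) (hβa : 0 < βa) (hαs : 0 < αs) (hβs : 0 < βs)
    (hαe : 0 < αe) (hβe : 0 < βe) (hαc : 0 < αc) (hβc : 0 < βc)
    (hk : 0 < k) (T : ℕ) (hT : 1 ≤ T)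
    (ta ts te ta2e X Y : ℝ → ℝ) (F G : ℝ → ℝ → ℝ → ℝ)
    (Θ : ℝ → ℝ → ℝ → ℝ → ℝ)
    (hta : ∀ m, ta m = αa + βa * m)
    (hts : ∀ m, ts m = αs + βs * m)
    (hte : ∀ m, te m = αe + βe * m)
    (hta2e : ∀ m, ta2e m = αc + βc * m)
    (hX : ∀ ma, X ma = ta ma + ts ma)
    (hY : ∀ me, Y me = max (te me) (ta2e me))
    (hF : ∀ r₂ ma me, F r₂ ma me = max (X ma) (r₂ * Y me))
    (hG : ∀ r₂ ma me, G r₂ ma me =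
      ta ma + 2 * ta2e me + te me + (r₂ - 1) * Y me)
    (hΘ : ∀ r₁ ma r₂ me, Θ r₁ ma r₂ me =
      r₁ * ma /
        (((T : ℝ) - 1) * max (G r₂ ma me) (r₁ * F r₂ ma me)
          + max (X ma) (G r₂ ma me)
          + (r₂ - 1) * Y me + (r₁ - 1) * F r₂ ma me))
    (ma r₂ me : ℝ) (hma : 0 < ma) (hr₂ : 1 ≤ r₂) (hme : me = k * ma / r₂) :
    ∀ r₁ r₁' : ℝ, 0 < r₁ → r₁ ≤ r₁' →
      Θ r₁ ma r₂ me ≤ Θ r₁' ma r₂ me := by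

  intro r₁ r₁' hr₁ hle
  have hr₁' : 0 < r₁' := lt_of_lt_of_le hr₁ hle
  have hr₂0 : (0:ℝ) < r₂ := lt_of_lt_of_le one_pos hr₂
  have hme0 : 0 < me := by rw [hme]; positivity
  set A := X ma with hAdef
  set Yv := Y me with hYdef
  set Gv := G r₂ ma me with hGdef
  set Fv := F r₂ ma me with hFdef
  have hte0 : 0 < te me := by rw [hte]; positivity
  have hta2e0 : 0 < ta2e me := by rw [hta2e]; positivity
  have hta0 : 0 < ta ma := by rw [hta]; positivity
  have hY0 : 0 < Yv := by
    rw [hYdef, hY]; exact lt_max_of_lt_left hte0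
  have hYle : Yv ≤ 2 * ta2e me + te me := by
    rw [hYdef, hY]
    exact max_le (by linarith) (by linarith)
  have hA0 : 0 < A := by
    rw [hAdef, hX, hta, hts]; positivity
  have hGY : r₂ * Yv ≤ Gv := by
    rw [hGdef, hG]; rw [hYdef] at hYle ⊢; nlinarith
  have hG0 : 0 < Gv := lt_of_lt_of_le (by positivity) hGY
  have hFeq : Fv = max A (r₂ * Yv) := by rw [hFdef, hF, hAdef, hYdef]
  have hF0 : 0 < Fv := by rw [hFeq]; exact lt_max_of_lt_left hA0
  have hFle : Fv ≤ max A Gv := by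
    rw [hFeq]; exact max_le_max le_rfl hGY
  have hT1 : (0:ℝ) ≤ (T:ℝ) - 1 := by
    have : (1:ℝ) ≤ (T:ℝ) := by exact_mod_cast hT
    linarith
  have hr2Y : 0 ≤ (r₂ - 1) * Yv := mul_nonneg (by linarith) hY0.le
  -- denominators
  have hD : ∀ r : ℝ, 0 < r →
      0 < ((T:ℝ) - 1) * max Gv (r * Fv) + max A Gv + (r₂ - 1) * Yv + (r - 1) * Fv := by
    intro r hr
    have h1 : Gv ≤ max Gv (r * Fv) := le_max_left _ _
    nlinarith [mul_nonneg hT1 (le_trans hG0.le h1)]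
  have hD1 := hD r₁ hr₁
  have hD2 := hD r₁' hr₁'
  -- key max inequality
  have hM : r₁ * max Gv (r₁' * Fv) ≤ r₁' * max Gv (r₁ * Fv) := by
    rw [mul_max_of_nonneg _ _ hr₁.le, mul_max_of_nonneg _ _ hr₁'.le]
    exact max_le_max (mul_le_mul_of_nonneg_right hle hG0.le) (by nlinarith)
  set M1 := max Gv (r₁ * Fv) with hM1
  set M2 := max Gv (r₁' * Fv) with hM2
  set C := max A Gv with hC
  rw [hΘ, hΘ, div_le_div_iff₀ hD1 hD2]
  have h1 : 0 ≤ ma * (((T:ℝ) - 1) * (r₁' * M1 - r₁ * M2)) :=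
    mul_nonneg hma.le (mul_nonneg hT1 (by linarith))
  have h2 : 0 ≤ ma * ((r₁' - r₁) * (C + (r₂ - 1) * Yv - Fv)) :=
    mul_nonneg hma.le (mul_nonneg (by linarith) (by linarith))
  have key : r₁' * ma * (((T:ℝ) - 1) * M1 + C + (r₂ - 1) * Yv + (r₁ - 1) * Fv)
      - r₁ * ma * (((T:ℝ) - 1) * M2 + C + (r₂ - 1) * Yv + (r₁' - 1) * Fv)
      = ma * (((T:ℝ) - 1) * (r₁' * M1 - r₁ * M2))
        + ma * ((r₁' - r₁) * (C + (r₂ - 1) * Yv - Fv)) := by ring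
  linarith [key]
end

section
/- Fix r₁ ≥ 1, m_a > 0, T ≥ 1, and set k′ = k·m_a, so that under the token-conservation constraint m_e = k′·u where u = 1/r₂. Then the scheduling cost (the denominator of the throughput objective, i.e., the minimization objective of Eq. 17), viewed as the function of u given by u ↦ (T − 1)·max(G(u), r₁·F(u)) + max(X(m_a), G(u)) + (1/u − 1)·Ŷ(u) + (r₁ − 1)·F(u), where Ŷ(u) = max(t_e(k′·u), t_{a2e}(k′·u)), F(u) = max(X(m_a), (1/u)·Ŷ(u)), and G(u) = t_a(m_a) + 2·t_{a2e}(k′·u) + t_e(k′·u) + (1/u − 1)·Ŷ(u), is a convex function of u on the interval (0, 1]. -/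
/-!
For `α ≥ 0` the map `u ↦ (1/u - 1)(α + βu) = α/u + (β - α) - βu` is convex on `(0, ∞)`, and on
`(0, 1]` the factor `1/u - 1` is nonnegative, so it distributes over the maximum defining `Ŷ`.
Every summand of the cost is then built from constants, affine maps and such functions by maxima,
sums and nonnegative scalings.
-/

open Set

lemma convexOn_const_add_mul {s : Set ℝ} (hs : Convex ℝ s) (a b : ℝ) :
    ConvexOn ℝ s fun u => a + b * u :=
  (convexOn_const a hs).add ((LinearMap.mulLeft ℝ b).convexOn hs)

lemma convexOn_one_div_sub_one_mul {α : ℝ} (hα : 0 ≤ α) (β : ℝ) :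
    ConvexOn ℝ (Ioi 0) fun u : ℝ => (1 / u - 1) * (α + β * u) := by
  have hinv : ConvexOn ℝ (Ioi 0) fun u : ℝ => u⁻¹ := by
    simpa using convexOn_zpow (𝕜 := ℝ) (-1)
  refine ((hinv.smul hα).add (convexOn_const_add_mul (convex_Ioi 0) (β - α) (-β))).congr
    fun u hu => ?_
  have : u ≠ 0 := (mem_Ioi.mp hu).ne'
  simp only [Pi.add_apply, smul_eq_mul]
  field_simp
  ring

lemma convexOn_one_div_sub_one_mul_max {α₁ α₂ : ℝ} (hα₁ : 0 ≤ α₁) (hα₂ : 0 ≤ α₂) (β₁ β₂ : ℝ) :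
    ConvexOn ℝ (Ioc 0 1) fun u : ℝ => (1 / u - 1) * max (α₁ + β₁ * u) (α₂ + β₂ * u) := by
  refine (((convexOn_one_div_sub_one_mul hα₁ β₁).sup
    (convexOn_one_div_sub_one_mul hα₂ β₂)).subset Ioc_subset_Ioi_self (convex_Ioc 0 1)).congr
    fun u hu => ?_
  have : 0 ≤ 1 / u - 1 := by
    rw [sub_nonneg, le_div_iff₀ hu.1, one_mul]; exact hu.2
  exact (mul_max_of_nonneg _ _ this).symm

theorem stmt_3_general
    (αe βe αc βc : ℝ)
    (hαe : 0 < αe) (hαc : 0 < αc)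
    (T : ℕ) (hT : 1 ≤ T)
    (ta te ta2e : ℝ → ℝ)
    (hte : ∀ m, te m = αe + βe * m)
    (hta2e : ∀ m, ta2e m = αc + βc * m)
    (r₁ ma : ℝ) (hr₁ : 1 ≤ r₁)
    (k' : ℝ)
    (X : ℝ)
    (Yh F G : ℝ → ℝ)
    (hYh : ∀ u, Yh u = max (te (k' * u)) (ta2e (k' * u)))
    (hF : ∀ u, F u = max X ((1 / u) * Yh u))
    (hG : ∀ u, G u = ta ma + 2 * ta2e (k' * u) + te (k' * u) + (1 / u - 1) * Yh u) :
    ConvexOn ℝ (Set.Ioc (0 : ℝ) 1) (fun u =>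
      ((T : ℝ) - 1) * max (G u) (r₁ * F u) + max X (G u)
        + (1 / u - 1) * Yh u + (r₁ - 1) * F u) := by
  have hs : Convex ℝ (Ioc (0 : ℝ) 1) := convex_Ioc 0 1
  have hYh' : Yh = fun u => max (αe + βe * k' * u) (αc + βc * k' * u) := by
    ext u; rw [hYh, hte, hta2e, mul_assoc, mul_assoc]
  have hYconv : ConvexOn ℝ (Ioc 0 1) Yh :=
    hYh' ▸ (convexOn_const_add_mul hs _ _).sup (convexOn_const_add_mul hs _ _)
  have hWconv : ConvexOn ℝ (Ioc 0 1) fun u => (1 / u - 1) * Yh u :=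
    hYh' ▸ convexOn_one_div_sub_one_mul_max hαe.le hαc.le _ _
  -- `(1 / u) * Yh u` splits as the convex `(1 / u - 1) * Yh u` plus the convex `Yh u`.
  have hFconv : ConvexOn ℝ (Ioc 0 1) F := by
    have hF' : F = fun u => max X ((1 / u - 1) * Yh u + Yh u) := by
      ext u; rw [hF]; ring_nf
    exact hF' ▸ (convexOn_const X hs).sup (hWconv.add hYconv)
  have hGconv : ConvexOn ℝ (Ioc 0 1) G := by
    have hG' :
        G = fun u => (ta ma + 2 * αc + αe + (2 * βc + βe) * k' * u) + (1 / u - 1) * Yh u := by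
      ext u; rw [hG, hte, hta2e]; ring
    exact hG' ▸ (convexOn_const_add_mul hs _ _).add hWconv
  have hT₁ : (0 : ℝ) ≤ T - 1 := by
    rw [sub_nonneg]; exact_mod_cast hT
  exact ((((hGconv.sup (hFconv.smul (by linarith))).smul hT₁).add
    ((convexOn_const X hs).sup hGconv)).add hWconv).add (hFconv.smul (by linarith))

/-- Paper Theorem 4.
Fix `r₁ ≥ 1`, `m_a > 0`, `T ≥ 1`, set `k′ = k·m_a`, and substitute `u = 1/r₂`
(so `m_e = k′·u`). The scheduling cost (denominator of the throughput objective),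
viewed as a function of `u`, is convex on `(0, 1]`. -/
theorem stmt_3
    (αa βa αs βs αe βe αc βc k : ℝ)
    (hαa : 0 < αa) (hβa : 0 < βa) (hαs : 0 < αs) (hβs : 0 < βs)
    (hαe : 0 < αe) (hβe : 0 < βe) (hαc : 0 < αc) (hβc : 0 < βc)
    (hk : 0 < k) (T : ℕ) (hT : 1 ≤ T)
    (ta ts te ta2e : ℝ → ℝ)
    (hta : ∀ m, ta m = αa + βa * m)
    (hts : ∀ m, ts m = αs + βs * m)
    (hte : ∀ m, te m = αe + βe * m)
    (hta2e : ∀ m, ta2e m = αc + βc * m)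
    (r₁ ma : ℝ) (hr₁ : 1 ≤ r₁) (hma : 0 < ma)
    (k' : ℝ) (hk' : k' = k * ma)
    (X : ℝ) (hX : X = ta ma + ts ma)
    (Yh F G : ℝ → ℝ)
    (hYh : ∀ u, Yh u = max (te (k' * u)) (ta2e (k' * u)))
    (hF : ∀ u, F u = max X ((1 / u) * Yh u))
    (hG : ∀ u, G u = ta ma + 2 * ta2e (k' * u) + te (k' * u) + (1 / u - 1) * Yh u) :
    ConvexOn ℝ (Set.Ioc (0 : ℝ) 1) (fun u =>
      ((T : ℝ) - 1) * max (G u) (r₁ * F u) + max X (G u)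
        + (1 / u - 1) * Yh u + (r₁ - 1) * F u) :=
  stmt_3_general αe βe αc βc hαe hαc T hT ta te ta2e hte hta2e r₁ ma hr₁ k' X Yh F G hYh hF hG
end
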